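/- arXiv:2605.14342 — 4 statements merged into one kernel-verified Lean document; each statement's English description precedes it below -/
import Mathlib

section
/- For all integers n ≥ 0 and k ≥ 1, the Fibonomial coefficient C(n+1, k)_F equals (−1)^{k(k−1)/2} times the determinant of the k×k matrix A (rows and columns indexed 1,…,k) defined by A(i,j) = C(n+i−j+1, n)_F for i ≥ j, A(i, i+1) = 1, and A(i,j) = 0 for j > i+1. -/
/-- The Fibonomial coefficient `C(n,k)_F = ∏_{r=1}^{k} F_{n-r+1}/F_r`, as a real number.
It equals `0` when `k > n` and `1` when `k = 0`. -/
noncomputable def fibonomial (n k : ℕ) : ℝ :=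
  ∏ r ∈ Finset.range k, (Nat.fib (n - r) : ℝ) / (Nat.fib (r + 1) : ℝ)

/-!
Let `Q n = ∑ₘ C(n+m, n)_F Xᵐ` (`fibonomialColumnSeries n`) and
`P n = ∑ⱼ (-1)^(j(j+1)/2) C(n+1, j)_F Xʲ` (`fibonomialSignedRowSeries n`). Written with `φ` and `ψ`,
the Pascal rules for Fibonomials say that `P (n+1) (X) = P n (ψX) (1 - φⁿ⁺¹X)` and
`Q (n+1) (X) (1 - φⁿ⁺¹X) = Q n (ψX)`, so `Q n * P n = 1` by induction from `Q 0 = 1 / (1 - X)`.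

For a power series `a` with `a₀ = 1` and inverse `b`, the `k × k` lower Hessenberg Toeplitz matrix
`M = (a_{i+1-j})` sends `(b₀, …, b_{k-1})` to `-b_k` times the last basis vector, so Cramer's rule
gives `det M = (-1)ᵏ b_k`. The theorem is the case `a = Q n`, `b = P n`.
-/

open Finset PowerSeries Matrix Real goldenRatio

theorem PowerSeries.coeff_mk_mul_mk {R : Type*} [CommSemiring R] (a b : ℕ → R) (m : ℕ) :
    coeff m (mk a * mk b) = ∑ j ∈ range (m + 1), a (m - j) * b j := by
  rw [mul_comm, coeff_mul, Nat.sum_antidiagonal_eq_sum_range_succ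
    (fun i j => coeff i (mk b) * coeff j (mk a))]
  simp only [coeff_mk, mul_comm]

theorem PowerSeries.coeff_succ_mul_one_sub_C_mul_X {R : Type*} [CommRing R] (f : PowerSeries R)
    (c : R) (m : ℕ) : coeff (m + 1) (f * (1 - C c * X)) = coeff (m + 1) f - c * coeff m f := by
  rw [mul_sub, mul_one, map_sub, mul_left_comm, coeff_C_mul, coeff_succ_mul_X]

theorem neg_one_pow_succ_choose_two {R : Type*} [Monoid R] [HasDistribNeg R] (j : ℕ) :
    (-1 : R) ^ (j + 1).choose 2 = (-1) ^ j * (-1) ^ j.choose 2 := by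
  rw [Nat.choose_succ_succ', Nat.choose_one_right, pow_add]

namespace Matrix

variable {R : Type*} [CommRing R]

def hessenbergToeplitz (a : ℕ → R) (k : ℕ) : Matrix (Fin k) (Fin k) R :=
  of fun i j => if (j : ℕ) ≤ i + 1 then a (i + 1 - j) else 0

variable {a b : ℕ → R}

theorem hessenbergToeplitz_mulVec (ha : a 0 = 1) (hab : mk a * mk b = 1) (k : ℕ) :
    hessenbergToeplitz a (k + 1) *ᵥ (fun j => b j) = Pi.single (Fin.last k) (-b (k + 1)) := by
  have hconv : ∀ m, ∑ j ∈ range (m + 1 + 1), a (m + 1 - j) * b j = 0 := fun m => by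
    rw [← coeff_mk_mul_mk, hab, coeff_one, if_neg m.succ_ne_zero]
  ext i
  simp only [mulVec, dotProduct, hessenbergToeplitz, of_apply, ite_mul, zero_mul]
  rw [Fin.sum_univ_eq_sum_range (fun j => if j ≤ i + 1 then a (i + 1 - j) * b j else 0) (k + 1)]
  rcases (Fin.le_last i).lt_or_eq with hi | rfl
  · have hi' : (i : ℕ) + 2 ≤ k + 1 := by rw [Fin.lt_def, Fin.val_last] at hi; omega
    rw [Pi.single_eq_of_ne hi.ne, ← sum_subset (range_subset_range.mpr hi') fun j _ hj => by
      rw [if_neg (by simp at hj; omega)], ← hconv i]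
    exact sum_congr rfl fun j hj => if_pos (by simp at hj; omega)
  · have := hconv k
    rw [sum_range_succ, Nat.sub_self, ha, one_mul] at this
    rw [Pi.single_eq_same, eq_neg_iff_add_eq_zero, ← this, Fin.val_last]
    exact congrArg (· + b (k + 1)) (sum_congr rfl fun j hj => if_pos (by simp at hj; omega))

theorem det_hessenbergToeplitz_updateCol_zero (ha : a 0 = 1) (k : ℕ) (c : R) :
    ((hessenbergToeplitz a (k + 1)).updateCol 0 (Pi.single (Fin.last k) c)).det =
      (-1) ^ k * c := by
  rw [det_succ_column _ 0, sum_eq_single (Fin.last k) (fun i _ hi => by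
    rw [updateCol_self, Pi.single_eq_of_ne hi]; ring) (by simp)]
  have hminor : ((hessenbergToeplitz a (k + 1)).updateCol 0 (Pi.single (Fin.last k) c)).submatrix
      (Fin.last k).succAbove (0 : Fin (k + 1)).succAbove = of fun p q : Fin k =>
        if (q : ℕ) ≤ p then a (p - q) else 0 := by
    ext p q
    simp only [submatrix_apply, Fin.succAbove_last, Fin.succAbove_zero,
      updateCol_ne (Fin.succ_ne_zero q), hessenbergToeplitz, of_apply, Fin.val_castSucc,
      Fin.val_succ]
    congr 1
    · simp
    · rw [Nat.add_sub_add_right]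
  have hunitriangular : (of fun p q : Fin k => if (q : ℕ) ≤ p then a (p - q) else 0).det = 1 := by
    refine (det_of_isLowerTriangular _ fun p q (hpq : p < q) => ?_).trans (by simp [ha])
    exact if_neg (Nat.not_le.mpr hpq)
  rw [hminor, hunitriangular, updateCol_self, Pi.single_eq_same, Fin.val_last]
  simp

theorem det_hessenbergToeplitz (ha : a 0 = 1) (hab : mk a * mk b = 1) (k : ℕ) :
    (hessenbergToeplitz a k).det = (-1) ^ k * b k := by
  have hb : b 0 = 1 := by simpa [ha] using congrArg (coeff 0) hab
  cases k with
  | zero => simp [hb]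
  | succ k =>
    set M := hessenbergToeplitz a (k + 1)
    have hcramer : cramer M (M *ᵥ fun j => b j) = M.det • fun j : Fin (k + 1) => b j := by
      rw [cramer_eq_adjugate_mulVec, mulVec_mulVec, adjugate_mul, smul_mulVec, one_mulVec]
    have h0 := congrFun hcramer 0
    rw [hessenbergToeplitz_mulVec ha hab, cramer_apply, det_hessenbergToeplitz_updateCol_zero ha]
      at h0
    simp only [Pi.smul_apply, smul_eq_mul, Fin.val_zero, hb, mul_one] at h0
    rw [← h0, pow_succ]
    ring

end Matrix

theorem Real.goldenRatio_pow_mul_goldenConj_pow {m j : ℕ} (h : j ≤ m) :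
    φ ^ m * ψ ^ j = (-1) ^ j * φ ^ (m - j) := by
  rw [← Nat.sub_add_cancel h, pow_add, mul_assoc, ← mul_pow, goldenRatio_mul_goldenConj,
    Nat.add_sub_cancel]
  ring

theorem Real.coe_fib_add (a b : ℕ) :
    (Nat.fib (a + b) : ℝ) = ψ ^ b * Nat.fib a + φ ^ a * Nat.fib b := by
  rw [coe_fib_eq, coe_fib_eq, coe_fib_eq]
  field_simp
  ring

theorem fibonomial_zero_right (n : ℕ) : fibonomial n 0 = 1 := by
  simp [fibonomial]

theorem fibonomial_of_lt {n k : ℕ} (h : n < k) : fibonomial n k = 0 :=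
  prod_eq_zero (mem_range.mpr h) (by simp)

theorem fibonomial_succ_right (n k : ℕ) :
    fibonomial n (k + 1) = fibonomial n k * Nat.fib (n - k) / Nat.fib (k + 1) := by
  rw [fibonomial, prod_range_succ, mul_div_assoc]
  rfl

theorem fibonomial_succ_succ (n k : ℕ) :
    fibonomial (n + 1) (k + 1) = Nat.fib (n + 1) / Nat.fib (k + 1) * fibonomial n k := by
  rw [fibonomial, fibonomial, prod_div_distrib, prod_div_distrib, prod_range_succ',
    prod_range_succ (fun r => (Nat.fib (r + 1) : ℝ)), div_mul_div_comm]
  simp only [Nat.add_sub_add_right, Nat.sub_zero]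
  ring

theorem fibonomial_self (n : ℕ) : fibonomial n n = 1 := by
  induction n with
  | zero => exact fibonomial_zero_right 0
  | succ n ih =>
    have : (Nat.fib (n + 1) : ℝ) ≠ 0 := by simp
    rw [fibonomial_succ_succ, ih, div_self this, mul_one]

-- Both `(α, β) = (φ, ψ)` and `(ψ, φ)` satisfy the addition formula, giving two Pascal rules.
theorem fibonomial_pascal {α β : ℝ}
    (hfib : ∀ a b, (Nat.fib (a + b) : ℝ) = β ^ b * Nat.fib a + α ^ a * Nat.fib b) (n k : ℕ) :
    fibonomial (n + 1) (k + 1) =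
      β ^ (k + 1) * fibonomial n (k + 1) + α ^ (n - k) * fibonomial n k := by
  rcases le_or_gt k n with hk | hk
  · have hF : (Nat.fib (k + 1) : ℝ) ≠ 0 := by simp
    have hsplit := hfib (n - k) (k + 1)
    rw [show n - k + (k + 1) = n + 1 by omega] at hsplit
    rw [fibonomial_succ_succ, fibonomial_succ_right, hsplit]
    field_simp
  · rw [fibonomial_of_lt hk, fibonomial_of_lt (by omega), fibonomial_of_lt (by omega)]
    simp

noncomputable def fibonomialColumnSeries (n : ℕ) : PowerSeries ℝ :=
  mk fun m => fibonomial (n + m) n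

noncomputable def fibonomialSignedRowSeries (n : ℕ) : PowerSeries ℝ :=
  mk fun j => (-1) ^ (j + 1).choose 2 * fibonomial (n + 1) j

theorem fibonomialColumnSeries_succ_mul (n : ℕ) :
    fibonomialColumnSeries (n + 1) * (1 - C (φ ^ (n + 1)) * X) =
      rescale ψ (fibonomialColumnSeries n) := by
  ext (_ | m)
  · simp [fibonomialColumnSeries, fibonomial_self]
  · have hpascal := fibonomial_pascal (α := ψ) (β := φ)
      (fun a b => by rw [add_comm, Real.coe_fib_add]; ring) (n + m + 1) n
    rw [coeff_succ_mul_one_sub_C_mul_X, coeff_rescale]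
    simp only [fibonomialColumnSeries, coeff_mk]
    rw [show n + 1 + (m + 1) = n + m + 1 + 1 by ring, show n + 1 + m = n + m + 1 by ring,
      show n + (m + 1) = n + m + 1 by ring, hpascal, show n + m + 1 - n = m + 1 by omega]
    ring

theorem fibonomialSignedRowSeries_succ (n : ℕ) :
    fibonomialSignedRowSeries (n + 1) =
      rescale ψ (fibonomialSignedRowSeries n) * (1 - C (φ ^ (n + 1)) * X) := by
  ext (_ | j)
  · simp [fibonomialSignedRowSeries, rescale_mk, fibonomial_zero_right]
  · rw [coeff_succ_mul_one_sub_C_mul_X, coeff_rescale, coeff_rescale]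
    simp only [fibonomialSignedRowSeries, coeff_mk]
    rw [fibonomial_pascal Real.coe_fib_add (n + 1) j, neg_one_pow_succ_choose_two (j + 1)]
    rcases le_or_gt j (n + 1) with hj | hj
    · linear_combination (-1) ^ (j + 1).choose 2 * fibonomial (n + 1) j *
        goldenRatio_pow_mul_goldenConj_pow hj
    · rw [fibonomial_of_lt hj]
      ring

theorem fibonomialColumnSeries_mul_signedRowSeries (n : ℕ) :
    fibonomialColumnSeries n * fibonomialSignedRowSeries n = 1 := by
  induction n with
  | zero =>
    have hcol : fibonomialColumnSeries 0 = PowerSeries.mk 1 := by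
      ext m
      simp [fibonomialColumnSeries, fibonomial_zero_right]
    have hrow : fibonomialSignedRowSeries 0 = 1 - X := by
      ext (_ | _ | j)
      · simp [fibonomialSignedRowSeries, fibonomial_zero_right]
      · simp [fibonomialSignedRowSeries, fibonomial_self]
      · simp [fibonomialSignedRowSeries, fibonomial_of_lt, coeff_X]
    rw [hcol, hrow, PowerSeries.mk_one_mul_one_sub_eq_one]
  | succ n ih =>
    rw [fibonomialSignedRowSeries_succ, mul_left_comm, fibonomialColumnSeries_succ_mul, ← map_mul,
      mul_comm, ih, map_one]

theorem fibonomial_det_hessenberg_general (n k : ℕ) :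
    fibonomial (n + 1) k =
      (-1 : ℝ) ^ (k * (k - 1) / 2) *
        Matrix.det (Matrix.of fun i j : Fin k =>
          if (j : ℕ) = (i : ℕ) + 1 then (1 : ℝ)
          else if (j : ℕ) ≤ (i : ℕ) then fibonomial (n + ((i : ℕ) - (j : ℕ)) + 1) n
          else 0) := by
  have hM : (Matrix.of fun i j : Fin k =>
          if (j : ℕ) = (i : ℕ) + 1 then (1 : ℝ)
          else if (j : ℕ) ≤ (i : ℕ) then fibonomial (n + ((i : ℕ) - (j : ℕ)) + 1) n
          else 0) = hessenbergToeplitz (fun m => fibonomial (n + m) n) k := by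
    ext i j
    simp only [hessenbergToeplitz, of_apply]
    rcases lt_trichotomy (j : ℕ) (i + 1) with hlt | heq | hgt
    · rw [if_neg hlt.ne, if_pos (by omega), if_pos hlt.le]
      congr 1
      omega
    · rw [if_pos heq, if_pos heq.le, heq, Nat.sub_self, Nat.add_zero, fibonomial_self]
    · rw [if_neg hgt.ne', if_neg (by omega), if_neg (by omega)]
  have hsign : (-1 : ℝ) ^ k.choose 2 * (-1) ^ k * (-1) ^ (k + 1).choose 2 = 1 := by
    rw [neg_one_pow_succ_choose_two, ← pow_add, ← pow_add, ← pow_add]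
    exact Even.neg_one_pow ⟨k.choose 2 + k, by ring⟩
  rw [hM, det_hessenbergToeplitz (fibonomial_self n)
    (fibonomialColumnSeries_mul_signedRowSeries n), ← Nat.choose_two_right, ← mul_assoc,
    ← mul_assoc, hsign, one_mul]

theorem fibonomial_det_hessenberg (n k : ℕ) (hk : 1 ≤ k) :
    fibonomial (n + 1) k =
      (-1 : ℝ) ^ (k * (k - 1) / 2) *
        Matrix.det (Matrix.of fun i j : Fin k =>
          if (j : ℕ) = (i : ℕ) + 1 then (1 : ℝ)
          else if (j : ℕ) ≤ (i : ℕ) then fibonomial (n + ((i : ℕ) - (j : ℕ)) + 1) n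
          else 0) :=
  fibonomial_det_hessenberg_general n k
end

section
/- For all integers n ≥ 0 and k ≥ 1, Σ_{l=0}^{k} (−1)^l C(n+l, n)_F · (−1)^{(k−l)(k−l−1)/2} C(n+1, k−l)_F = 0. -/
/-!
With `q = ψ / φ = -1 / φ ^ 2`, Binet's formula reads `F_m = φ ^ m (1 - q ^ m) / √5`, so
`C(m, k)_F = φ ^ (k (m - k)) [m, k]_q`, and `(-1) ^ C(j, 2) = q ^ C(j, 2) φ ^ (j (j - 1))`. After
pulling out `φ ^ (n k)`, the sum is the coefficient of `x ^ k` in `A_n(x) P_n(x)`, where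
`A_n(x) = ∑ (-1) ^ l [n + l, n]_q x ^ l` and `P_n(x) = ∏_{i ≤ n} (1 + q ^ i x)`, whose
coefficients are `q ^ C(j, 2) [n + 1, j]_q` (q-binomial theorem). By the q-Pascal rule
`(1 + x) A_{n+1}(x) = A_n(q x)`, while `P_{n+1}(x) = (1 + x) P_n(q x)`; hence `A_n P_n = 1`.
-/

open Finset PowerSeries

/-- The Gaussian binomial coefficient `[m, k]_q`, meaningful when `q` is not a root of unity.
For `k > m` it vanishes through the factor `1 - q ^ (m - m)`. -/
noncomputable def qBinom {K : Type*} [Field K] (q : K) (m k : ℕ) : K :=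
  ∏ r ∈ range k, (1 - q ^ (m - r)) / (1 - q ^ (r + 1))

namespace qBinom

variable {K : Type*} [Field K] (q : K)

@[simp]
theorem zero_right (m : ℕ) : qBinom q m 0 = 1 := prod_range_zero _

theorem succ_right (m k : ℕ) :
    qBinom q m (k + 1) = qBinom q m k * ((1 - q ^ (m - k)) / (1 - q ^ (k + 1))) :=
  prod_range_succ _ _

theorem eq_zero_of_lt {m k : ℕ} (h : m < k) : qBinom q m k = 0 :=
  prod_eq_zero (mem_range.2 h) (by simp)

theorem succ_succ_eq_div_mul (m k : ℕ) :
    qBinom q (m + 1) (k + 1) = (1 - q ^ (m + 1)) / (1 - q ^ (k + 1)) * qBinom q m k := by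
  rw [qBinom, qBinom, prod_div_distrib, prod_div_distrib, prod_range_succ',
    prod_range_succ (fun r ↦ 1 - q ^ (r + 1))]
  simp only [Nat.add_sub_add_right, Nat.sub_zero]
  rw [mul_div_mul_comm, mul_comm]

variable {q}

theorem one_sub_pow_succ_ne_zero (hq : ¬IsOfFinOrder q) (k : ℕ) : 1 - q ^ (k + 1) ≠ 0 :=
  fun h ↦ hq (isOfFinOrder_iff_pow_eq_one.2 ⟨k + 1, k.succ_pos, (sub_eq_zero.1 h).symm⟩)

theorem self (hq : ¬IsOfFinOrder q) (m : ℕ) : qBinom q m m = 1 := by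
  induction m with
  | zero => exact zero_right q 0
  | succ m ih =>
    rw [succ_succ_eq_div_mul, ih, mul_one, div_self (one_sub_pow_succ_ne_zero hq m)]

theorem succ_succ (hq : ¬IsOfFinOrder q) (m k : ℕ) :
    qBinom q (m + 1) (k + 1) = qBinom q m k + q ^ (k + 1) * qBinom q m (k + 1) := by
  rcases le_or_gt k m with hkm | hmk
  · have hpow : q ^ (m + 1) = q ^ (k + 1) * q ^ (m - k) := by rw [← pow_add]; congr 1; omega
    have hne := one_sub_pow_succ_ne_zero hq k
    rw [succ_succ_eq_div_mul, succ_right, hpow]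
    field_simp
    ring
  · simp [eq_zero_of_lt q hmk, eq_zero_of_lt q (Nat.lt_succ_of_lt hmk),
      eq_zero_of_lt q (Nat.succ_lt_succ hmk)]

theorem succ_right_mul_one_sub_pow (hq : ¬IsOfFinOrder q) (m k : ℕ) :
    qBinom q m (k + 1) * (1 - q ^ (k + 1)) = qBinom q m k * (1 - q ^ (m - k)) := by
  rw [succ_right, mul_assoc, div_mul_cancel₀ _ (one_sub_pow_succ_ne_zero hq k)]

theorem succ_succ' (hq : ¬IsOfFinOrder q) (m k : ℕ) :
    qBinom q (m + 1) (k + 1) = q ^ (m - k) * qBinom q m k + qBinom q m (k + 1) := by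
  linear_combination succ_succ hq m k - succ_right_mul_one_sub_pow hq m k

end qBinom

namespace PowerSeries

variable {R : Type*} [CommRing R]

theorem rescale_C (a b : R) : rescale a (C b) = C b := by
  ext n
  rcases eq_or_ne n 0 with rfl | hn <;> simp [coeff_C, *]

theorem prod_range_succ_one_add_C_pow_mul_X (q : R) (m : ℕ) :
    ∏ i ∈ range (m + 1), (1 + C (q ^ i) * X) =
      (1 + X) * rescale q (∏ i ∈ range m, (1 + C (q ^ i) * X)) := by
  rw [prod_range_succ', mul_comm, map_prod]
  simp [rescale_X, rescale_C, pow_succ, mul_assoc]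

theorem mk_neg_one_pow_mul_one_add_X : mk (fun l ↦ (-1 : R) ^ l) * (1 + X) = 1 := by
  ext (_ | l)
  · simp
  · simp [mul_add, coeff_succ_mul_X, pow_succ]

end PowerSeries

section GeneratingFunctions

variable {K : Type*} [Field K] {q : K}

theorem coeff_prod_one_add_C_pow_mul_X (hq : ¬IsOfFinOrder q) (m j : ℕ) :
    coeff j (∏ i ∈ range m, (1 + C (q ^ i) * X)) = q ^ j.choose 2 * qBinom q m j := by
  induction m generalizing j with
  | zero => cases j <;> simp [qBinom.eq_zero_of_lt]
  | succ m ih =>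
    rw [prod_range_succ_one_add_C_pow_mul_X]
    cases j with
    | zero => simp
    | succ j =>
      rw [add_mul, one_mul, map_add, coeff_succ_X_mul, coeff_rescale, coeff_rescale, ih, ih,
        qBinom.succ_succ hq, Nat.choose_succ_succ', Nat.choose_one_right]
      ring

theorem mk_neg_one_pow_qBinom_succ_mul_one_add_X (hq : ¬IsOfFinOrder q) (n : ℕ) :
    mk (fun l ↦ (-1) ^ l * qBinom q (n + 1 + l) (n + 1)) * (1 + X) =
      rescale q (mk fun l ↦ (-1) ^ l * qBinom q (n + l) n) := by
  ext (_ | l)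
  · simp [qBinom.self hq]
  · rw [mul_add, mul_one, map_add, coeff_succ_mul_X, coeff_mk, coeff_mk, coeff_rescale, coeff_mk,
      show n + 1 + (l + 1) = n + 1 + l + 1 by ring, qBinom.succ_succ' hq,
      show n + 1 + l - n = l + 1 by omega, show n + 1 + l = n + (l + 1) by ring]
    ring

theorem mk_neg_one_pow_qBinom_mul_prod (hq : ¬IsOfFinOrder q) (n : ℕ) :
    mk (fun l ↦ (-1) ^ l * qBinom q (n + l) n) * ∏ i ∈ range (n + 1), (1 + C (q ^ i) * X) =
      1 := by
  induction n with
  | zero => simpa using mk_neg_one_pow_mul_one_add_X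
  | succ n ih =>
    rw [prod_range_succ_one_add_C_pow_mul_X, ← mul_assoc,
      mk_neg_one_pow_qBinom_succ_mul_one_add_X hq, ← map_mul, ih, map_one]

theorem sum_neg_one_pow_mul_qBinom_mul_qBinom (hq : ¬IsOfFinOrder q) (n : ℕ) {k : ℕ}
    (hk : k ≠ 0) :
    ∑ l ∈ range (k + 1),
      (-1) ^ l * qBinom q (n + l) n * (q ^ (k - l).choose 2 * qBinom q (n + 1) (k - l)) = 0 := by
  have h := congrArg (coeff k) (mk_neg_one_pow_qBinom_mul_prod hq n)
  rw [coeff_mul, Nat.sum_antidiagonal_eq_sum_range_succ_mk, coeff_one, if_neg hk] at h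
  simpa only [coeff_mk, coeff_prod_one_add_C_pow_mul_X hq] using h

end GeneratingFunctions

open Real goldenRatio

theorem not_isOfFinOrder_goldenConj_div_goldenRatio : ¬IsOfFinOrder (ψ / φ) := by
  intro h
  obtain ⟨m, hm, hpow⟩ := isOfFinOrder_iff_pow_eq_one.1 h
  rw [pow_eq_one_iff_of_ne_zero hm.ne', div_eq_iff goldenRatio_ne_zero,
    div_eq_iff goldenRatio_ne_zero] at hpow
  have := goldenConj_neg
  have := goldenRatio_pos
  have := goldenRatio_add_goldenConj
  rcases hpow with h1 | ⟨h1, -⟩ <;> linarith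

theorem goldenConj_div_goldenRatio_mul_sq : ψ / φ * φ ^ 2 = -1 := by
  rw [sq, ← mul_assoc, div_mul_cancel₀ _ goldenRatio_ne_zero, mul_comm,
    goldenRatio_mul_goldenConj]

theorem coe_fib_eq_goldenRatio_pow_mul (m : ℕ) :
    (Nat.fib m : ℝ) = φ ^ m * (1 - (ψ / φ) ^ m) / √5 := by
  rw [coe_fib_eq, div_pow ψ φ, mul_sub, mul_one,
    mul_div_cancel₀ _ (pow_ne_zero _ goldenRatio_ne_zero)]

theorem prod_range_goldenRatio_pow_div {m k : ℕ} (hkm : k ≤ m) :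
    ∏ r ∈ range k, φ ^ (m - r) / φ ^ (r + 1) = φ ^ (k * (m - k)) := by
  rw [prod_div_distrib, ← prod_range_reflect (fun r ↦ φ ^ (r + 1)), ← prod_div_distrib]
  have hr : ∀ r ∈ range k, φ ^ (m - r) / φ ^ (k - 1 - r + 1) = φ ^ (m - k) := by
    intro r hr
    rw [div_eq_iff (pow_ne_zero _ goldenRatio_ne_zero), ← pow_add]
    congr 1
    have := mem_range.1 hr
    omega
  rw [prod_congr rfl hr, prod_const, card_range, ← pow_mul, mul_comm]

theorem fibonomial_eq_goldenRatio_pow_mul_qBinom (m k : ℕ) :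
    fibonomial m k = φ ^ (k * (m - k)) * qBinom (ψ / φ) m k := by
  rcases le_or_gt k m with hkm | hmk
  · rw [fibonomial, qBinom, ← prod_range_goldenRatio_pow_div hkm, ← prod_mul_distrib]
    refine prod_congr rfl fun r _ ↦ ?_
    rw [coe_fib_eq_goldenRatio_pow_mul, coe_fib_eq_goldenRatio_pow_mul,
      div_div_div_cancel_right₀ (by positivity), mul_div_mul_comm]
  · rw [qBinom.eq_zero_of_lt _ hmk, mul_zero]
    exact prod_eq_zero (mem_range.2 hmk) (by simp)

theorem neg_one_pow_choose_two_mul_fibonomial (m j : ℕ) :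
    (-1) ^ j.choose 2 * fibonomial (m + 1) j =
      φ ^ (m * j) * ((ψ / φ) ^ j.choose 2 * qBinom (ψ / φ) (m + 1) j) := by
  rcases le_or_gt j (m + 1) with hjm | hmj
  · have hexp : m * j = j * (m + 1 - j) + 2 * j.choose 2 := by
      rw [Nat.choose_two_right, Nat.mul_div_cancel' (Nat.even_mul_pred_self j).two_dvd]
      rcases j with _ | j
      · simp
      · rw [Nat.add_sub_cancel, ← mul_add, mul_comm]
        congr 1
        omega
    rw [fibonomial_eq_goldenRatio_pow_mul_qBinom, hexp, pow_add, pow_mul φ 2,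
      ← goldenConj_div_goldenRatio_mul_sq, mul_pow]
    ring
  · simp [fibonomial_eq_goldenRatio_pow_mul_qBinom, qBinom.eq_zero_of_lt _ hmj]

theorem alternating_fibonomial_convolution (n k : ℕ) (hk : 1 ≤ k) :
    ∑ l ∈ Finset.range (k + 1),
      (-1 : ℝ) ^ l * fibonomial (n + l) n *
        (-1 : ℝ) ^ ((k - l) * (k - l - 1) / 2) * fibonomial (n + 1) (k - l) = 0 := by
  have hterm : ∀ l ∈ range (k + 1),
      (-1 : ℝ) ^ l * fibonomial (n + l) n *
          (-1 : ℝ) ^ ((k - l) * (k - l - 1) / 2) * fibonomial (n + 1) (k - l) =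
        φ ^ (n * k) * ((-1) ^ l * qBinom (ψ / φ) (n + l) n *
          ((ψ / φ) ^ (k - l).choose 2 * qBinom (ψ / φ) (n + 1) (k - l))) := by
    intro l hl
    have hlk : n * l + n * (k - l) = n * k := by
      rw [← mul_add, Nat.add_sub_cancel' (Nat.lt_succ_iff.1 (mem_range.1 hl))]
    rw [← Nat.choose_two_right, mul_assoc _ ((-1) ^ _), neg_one_pow_choose_two_mul_fibonomial,
      fibonomial_eq_goldenRatio_pow_mul_qBinom, Nat.add_sub_cancel_left, ← hlk, pow_add]
    ring
  rw [sum_congr rfl hterm, ← mul_sum,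
    sum_neg_one_pow_mul_qBinom_mul_qBinom not_isOfFinOrder_goldenConj_div_goldenRatio n
      (Nat.one_le_iff_ne_zero.1 hk), mul_zero]
end

section
/- For all integers 0 ≤ K ≤ N, the following identity holds in the real numbers: C(N, K)_F = α^{K(N−K)} · ∏_{r=1}^{K} (1 − q^{N−r+1})/(1 − q^r), where q = β/α; i.e., the Fibonomial coefficient equals α^{K(N−K)} times the Gaussian binomial coefficient [N choose K]_q evaluated at q = β/α. -/
open Finset

theorem sum_range_tsub_eq_sum_range_succ_add {N k : ℕ} (hk : k ≤ N) :
    ∑ r ∈ range k, (N - r) = ∑ r ∈ range k, (r + 1) + k * (N - k) := by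
  rw [← sum_range_reflect]
  calc ∑ r ∈ range k, (N - (k - 1 - r)) = ∑ r ∈ range k, ((r + 1) + (N - k)) :=
        sum_congr rfl fun r hr => by have := mem_range.1 hr; omega
    _ = ∑ r ∈ range k, (r + 1) + k * (N - k) := by
        rw [sum_add_distrib, sum_const, card_range, smul_eq_mul]

theorem prod_range_tsub_div_succ_eq_pow_mul {G₀ : Type*} [CommGroupWithZero G₀]
    {u v : ℕ → G₀} {c a : G₀} (hc : c ≠ 0) (ha : a ≠ 0) (hu : ∀ m, u m = c * a ^ m * v m)
    {N k : ℕ} (hk : k ≤ N) :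
    ∏ r ∈ range k, u (N - r) / u (r + 1) =
      a ^ (k * (N - k)) * ∏ r ∈ range k, v (N - r) / v (r + 1) := by
  calc ∏ r ∈ range k, u (N - r) / u (r + 1)
        = ∏ r ∈ range k, a ^ (N - r) / a ^ (r + 1) * (v (N - r) / v (r + 1)) :=
        prod_congr rfl fun r _ => by
          rw [hu, hu, mul_assoc, mul_assoc, mul_div_mul_left _ _ hc, mul_div_mul_comm]
    _ = a ^ (k * (N - k)) * ∏ r ∈ range k, v (N - r) / v (r + 1) := by
        rw [prod_mul_distrib, prod_div_distrib, prod_pow_eq_pow_sum, prod_pow_eq_pow_sum,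
          sum_range_tsub_eq_sum_range_succ_add hk, pow_add,
          mul_div_cancel_left₀ _ (pow_ne_zero _ ha)]

open Real goldenRatio in
theorem coe_fib_eq_inv_sqrt_five_mul_goldenRatio_pow_mul (m : ℕ) :
    (Nat.fib m : ℝ) = (√5)⁻¹ * φ ^ m * (1 - (ψ / φ) ^ m) := by
  have hψ : φ ^ m * (ψ / φ) ^ m = ψ ^ m := by
    rw [← mul_pow, mul_div_cancel₀ _ goldenRatio_ne_zero]
  rw [coe_fib_eq, mul_assoc, mul_one_sub, hψ, div_eq_inv_mul]

theorem fibonomial_eq_pow_mul_gaussian (N K : ℕ) (hKN : K ≤ N) :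
    fibonomial N K =
      ((1 + Real.sqrt 5) / 2) ^ (K * (N - K)) *
        ∏ r ∈ Finset.range K,
          (1 - (((1 - Real.sqrt 5) / 2) / ((1 + Real.sqrt 5) / 2)) ^ (N - r)) /
            (1 - (((1 - Real.sqrt 5) / 2) / ((1 + Real.sqrt 5) / 2)) ^ (r + 1)) :=
  prod_range_tsub_div_succ_eq_pow_mul (u := fun m => (Nat.fib m : ℝ))
    (inv_ne_zero (by positivity)) Real.goldenRatio_ne_zero
    coe_fib_eq_inv_sqrt_five_mul_goldenRatio_pow_mul hKN
end

section
/- Trudi's formula: for every integer n ≥ 1 and all real numbers a_0, a_1, …, a_n, the determinant of the n×n lower Hessenberg matrix (rows and columns indexed 1,…,n) with (i,j) entry a_{i−j+1} for i ≥ j, entry a_0 for j = i+1, and entry 0 for j > i+1, equals Σ ((t_1+⋯+t_n)! / (t_1! ⋯ t_n!)) · (−a_0)^{n−(t_1+⋯+t_n)} · a_1^{t_1} a_2^{t_2} ⋯ a_n^{t_n}, where the sum ranges over all tuples (t_1, …, t_n) of nonnegative integers satisfying t_1 + 2t_2 + ⋯ + n t_n = n. -/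
open Finset

lemma fact_pred (k : ℕ) (hk : 1 ≤ k) : k.factorial = k * (k - 1).factorial := by
  cases k with
  | zero => omega
  | succ n => simp [Nat.factorial_succ]

/-- Real-valued multinomial coefficient of a multiset. -/
noncomputable def mR (m : Multiset ℕ) : ℝ :=
  ((Multiset.card m).factorial : ℝ) / ∏ x ∈ m.toFinset, ((m.count x).factorial : ℝ)

lemma prodFact_pos (m : Multiset ℕ) : 0 < ∏ x ∈ m.toFinset, ((m.count x).factorial : ℝ) :=
  Finset.prod_pos fun x _ => by exact_mod_cast Nat.factorial_pos _

lemma mR_zero : mR 0 = 1 := by simp [mR]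

lemma mR_erase (m : Multiset ℕ) (x : ℕ) (hx : x ∈ m) :
    mR (m.erase x) = (m.count x : ℝ) / (Multiset.card m : ℝ) * mR m := by
  have hcard : Multiset.card m ≠ 0 := by
    intro h; rw [Multiset.card_eq_zero] at h; simp [h] at hx
  have hcount : 1 ≤ m.count x := Multiset.one_le_count_iff_mem.2 hx
  have hsub : (m.erase x).toFinset ⊆ m.toFinset := by
    intro y hy
    rw [Multiset.mem_toFinset] at hy ⊢
    exact Multiset.mem_of_mem_erase hy
  have hprod : (∏ y ∈ (m.erase x).toFinset, (((m.erase x).count y).factorial : ℝ))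
      = ∏ y ∈ m.toFinset, (((m.erase x).count y).factorial : ℝ) := by
    refine Finset.prod_subset hsub (f := fun y => (((m.erase x).count y).factorial : ℝ))
      fun y hy hy' => ?_
    rw [Multiset.mem_toFinset] at hy'
    have : (m.erase x).count y = 0 := Multiset.count_eq_zero.2 hy'
    simp [this]
  have hxmem : x ∈ m.toFinset := Multiset.mem_toFinset.2 hx
  have hsplit : (∏ y ∈ m.toFinset, (((m.erase x).count y).factorial : ℝ)) * (m.count x : ℝ)
      = ∏ y ∈ m.toFinset, ((m.count y).factorial : ℝ) := by
    rw [← Finset.prod_erase_mul _ _ hxmem, ← Finset.prod_erase_mul _ _ hxmem]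
    have h1 : ∀ y ∈ m.toFinset.erase x, (((m.erase x).count y).factorial : ℝ)
        = ((m.count y).factorial : ℝ) := by
      intro y hy
      rw [Multiset.count_erase_of_ne (Finset.ne_of_mem_erase hy)]
    rw [Finset.prod_congr rfl h1, Multiset.count_erase_self]
    have : (m.count x).factorial = m.count x * (m.count x - 1).factorial :=
      fact_pred _ hcount
    push_cast [this]
    ring
  have hcarde : Multiset.card (m.erase x) = Multiset.card m - 1 :=
    Multiset.card_erase_of_mem hx
  rw [mR, mR, hprod, hcarde]
  have hfac : ((Multiset.card m).factorial : ℝ)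
      = (Multiset.card m : ℝ) * ((Multiset.card m - 1).factorial : ℝ) := by
    have := fact_pred _ (Nat.one_le_iff_ne_zero.2 hcard)
    push_cast [this]
    ring
  have h2 : (∏ y ∈ m.toFinset, ((m.count y).factorial : ℝ)) ≠ 0 := (prodFact_pos m).ne'
  have h3 : (∏ y ∈ m.toFinset, (((m.erase x).count y).factorial : ℝ)) ≠ 0 := by
    refine (Finset.prod_pos fun y _ => ?_).ne'
    exact_mod_cast Nat.factorial_pos _
  have hc : (Multiset.card m : ℝ) ≠ 0 := by exact_mod_cast hcard
  field_simp
  rw [hfac]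
  linear_combination (-(Multiset.card m : ℝ) * ((Multiset.card m - 1).factorial : ℝ)) * hsplit

lemma mR_pascal (m : Multiset ℕ) (hm : m ≠ 0) :
    ∑ x ∈ m.toFinset, mR (m.erase x) = mR m := by
  have hcard : Multiset.card m ≠ 0 := by simpa [Multiset.card_eq_zero] using hm
  have hc : (Multiset.card m : ℝ) ≠ 0 := by exact_mod_cast hcard
  have : ∑ x ∈ m.toFinset, mR (m.erase x)
      = (∑ x ∈ m.toFinset, (m.count x : ℝ)) / (Multiset.card m : ℝ) * mR m := by
    rw [Finset.sum_div, Finset.sum_mul]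
    exact Finset.sum_congr rfl fun x hx => mR_erase m x (Multiset.mem_toFinset.1 hx)
  rw [this]
  have hsum : (∑ x ∈ m.toFinset, (m.count x : ℝ)) = (Multiset.card m : ℝ) := by
    norm_cast
    exact Multiset.toFinset_sum_count_eq m
  rw [hsum, div_self hc, one_mul]


lemma card_le_sum_of_pos (m : Multiset ℕ) (h : ∀ x ∈ m, 0 < x) :
    Multiset.card m ≤ m.sum := by
  induction m using Multiset.induction_on with
  | empty => simp
  | cons x s ih =>
    simp only [Multiset.card_cons, Multiset.sum_cons]
    have hx := h x (Multiset.mem_cons_self x s)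
    have := ih fun y hy => h y (Multiset.mem_cons_of_mem hy)
    omega

noncomputable def Tsum (a : ℕ → ℝ) (N : ℕ) : ℝ :=
  ∑ p : Nat.Partition N,
    mR p.parts * (-(a 0)) ^ (N - Multiset.card p.parts) * (p.parts.map a).prod

lemma partition_zero_parts (p : Nat.Partition 0) : p.parts = 0 := by
  refine Multiset.eq_zero_of_forall_notMem fun x hx => ?_
  have h1 := p.parts_pos hx
  have h2 := Multiset.le_sum_of_mem hx
  rw [p.parts_sum] at h2
  omega

lemma Tsum_zero (a : ℕ → ℝ) : Tsum a 0 = 1 := by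
  have p0 : Nat.Partition 0 := ⟨0, by simp, by simp⟩
  have hsub : ∀ p q : Nat.Partition 0, p = q := fun p q =>
    Nat.Partition.ext (by rw [partition_zero_parts p, partition_zero_parts q])
  rw [Tsum, Fintype.sum_eq_single p0 (fun q hq => absurd (hsub q p0) hq)]
  simp [partition_zero_parts p0, mR_zero]

lemma Tsum_rec (a : ℕ → ℝ) (n : ℕ) :
    Tsum a (n + 1) =
      ∑ m ∈ Finset.range (n + 1), a (m + 1) * (-(a 0)) ^ m * Tsum a (n - m) := by
  -- rewrite both sides as sigma sums
  have lhs_eq : Tsum a (n + 1) =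
      ∑ pr ∈ (Finset.univ : Finset (Nat.Partition (n+1))).sigma (fun p => p.parts.toFinset),
        mR (pr.1.parts.erase pr.2) *
          ((-(a 0)) ^ (n + 1 - Multiset.card pr.1.parts) * (pr.1.parts.map a).prod) := by
    rw [Tsum, Finset.sum_sigma]
    refine Finset.sum_congr rfl fun p _ => ?_
    have hne : p.parts ≠ 0 := by
      intro h
      have := p.parts_sum
      rw [h] at this
      simp at this
    rw [← mR_pascal p.parts hne, Finset.sum_mul, Finset.sum_mul]
    exact Finset.sum_congr rfl fun x _ => by ring
  have rhs_eq : (∑ m ∈ Finset.range (n + 1), a (m + 1) * (-(a 0)) ^ m * Tsum a (n - m)) =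
      ∑ pr ∈ (Finset.range (n+1)).sigma
          (fun m => (Finset.univ : Finset (Nat.Partition (n - m)))),
        a (pr.1 + 1) * (-(a 0)) ^ pr.1 *
          (mR pr.2.parts * (-(a 0)) ^ (n - pr.1 - Multiset.card pr.2.parts) *
            (pr.2.parts.map a).prod) := by
    rw [Finset.sum_sigma]
    refine Finset.sum_congr rfl fun m _ => ?_
    rw [Tsum, Finset.mul_sum]
  rw [lhs_eq, rhs_eq]
  refine Finset.sum_bij'
    (fun pr h => ⟨pr.2 - 1, ⟨pr.1.parts.erase pr.2,
      fun hi => pr.1.parts_pos (Multiset.mem_of_mem_erase hi), by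
        obtain ⟨p, x⟩ := pr
        rw [Finset.mem_sigma, Multiset.mem_toFinset] at h
        have hx : x ∈ p.parts := h.2
        have hxpos : 0 < x := p.parts_pos hx
        have hxle : x ≤ n + 1 := by
          have := Multiset.le_sum_of_mem hx
          rw [p.parts_sum] at this; exact this
        have hce : x + (p.parts.erase x).sum = n + 1 := by
          have h2 : (x ::ₘ p.parts.erase x).sum = p.parts.sum := by
            rw [Multiset.cons_erase hx]
          rw [Multiset.sum_cons, p.parts_sum] at h2
          exact h2
        dsimp only
        omega⟩⟩)
    (fun pr h => ⟨⟨(pr.1 + 1) ::ₘ pr.2.parts, by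
        intro i hi
        rcases Multiset.mem_cons.1 hi with rfl | hi'
        · omega
        · exact pr.2.parts_pos hi', by
        obtain ⟨m, p'⟩ := pr
        rw [Finset.mem_sigma, Finset.mem_range] at h
        dsimp only at h ⊢
        rw [Multiset.sum_cons, p'.parts_sum]
        omega⟩, pr.1 + 1⟩)
    ?_ ?_ ?_ ?_ ?_
  · -- forward lands in target
    rintro ⟨p, x⟩ h
    have h' := h
    rw [Finset.mem_sigma, Multiset.mem_toFinset] at h'
    rw [Finset.mem_sigma, Finset.mem_range]
    have hx : x ∈ p.parts := h'.2
    have hxle : x ≤ n + 1 := by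
      have := Multiset.le_sum_of_mem hx
      rw [p.parts_sum] at this; exact this
    exact ⟨by dsimp only; omega, Finset.mem_univ _⟩
  · -- backward lands in source
    rintro ⟨m, p'⟩ h
    rw [Finset.mem_sigma, Multiset.mem_toFinset]
    exact ⟨Finset.mem_univ _, Multiset.mem_cons_self _ _⟩
  · -- left inverse
    rintro ⟨p, x⟩ h
    have h' := h
    rw [Finset.mem_sigma, Multiset.mem_toFinset] at h'
    have hx : x ∈ p.parts := h'.2
    have hxpos : 0 < x := p.parts_pos hx
    have h1 : x - 1 + 1 = x := by omega
    refine Sigma.ext ?_ (heq_of_eq ?_) <;> dsimp only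
    · refine Nat.Partition.ext ?_
      show (x - 1 + 1) ::ₘ p.parts.erase x = p.parts
      rw [h1]
      exact Multiset.cons_erase hx
    · exact h1
  · -- right inverse
    rintro ⟨m, p'⟩ h
    refine Sigma.ext rfl (heq_of_eq ?_)
    dsimp only
    exact Nat.Partition.ext (Multiset.erase_cons_head _ _)
  · -- weights agree
    rintro ⟨p, x⟩ h
    rw [Finset.mem_sigma, Multiset.mem_toFinset] at h
    have hx : x ∈ p.parts := h.2
    have hxpos : 0 < x := p.parts_pos hx
    have hcons : x ::ₘ p.parts.erase x = p.parts := Multiset.cons_erase hx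
    have hxle : x ≤ n + 1 := by
      have := Multiset.le_sum_of_mem hx
      rw [p.parts_sum] at this; exact this
    have hce : x + (p.parts.erase x).sum = n + 1 := by
      have h2 : (x ::ₘ p.parts.erase x).sum = p.parts.sum := by rw [hcons]
      rw [Multiset.sum_cons, p.parts_sum] at h2
      exact h2
    have hcard : Multiset.card p.parts = Multiset.card (p.parts.erase x) + 1 := by
      have := congrArg Multiset.card hcons
      rw [Multiset.card_cons] at this
      omega
    have hcle : Multiset.card (p.parts.erase x) ≤ (p.parts.erase x).sum :=
      card_le_sum_of_pos _ fun y hy => p.parts_pos (Multiset.mem_of_mem_erase hy)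
    have hprod : (p.parts.map a).prod = a x * ((p.parts.erase x).map a).prod := by
      conv_lhs => rw [← hcons]
      rw [Multiset.map_cons, Multiset.prod_cons]
    have h1 : x - 1 + 1 = x := by omega
    dsimp only
    rw [hprod, h1]
    have hexp : n + 1 - Multiset.card p.parts
        = (x - 1) + ((n - (x - 1)) - Multiset.card (p.parts.erase x)) := by omega
    rw [hexp, pow_add]
    ring


def Ematrix (a : ℕ → ℝ) (k n : ℕ) : Matrix (Fin n) (Fin n) ℝ :=
  Matrix.of fun i j =>
    if (j : ℕ) = (i : ℕ) + 1 then a 0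
    else if (j : ℕ) = 0 then a ((i : ℕ) + k)
    else if (j : ℕ) ≤ (i : ℕ) then a ((i : ℕ) - (j : ℕ) + 1)
    else 0

lemma succAbove_one_val (n : ℕ) (j : Fin (n+1)) :
    (((1 : Fin (n+2)).succAbove j : Fin (n+2)) : ℕ)
      = if (j : ℕ) < 1 then (j : ℕ) else (j : ℕ) + 1 := by
  rcases j with ⟨jv, hj⟩
  rw [Fin.succAbove]
  split_ifs with h1 h2 h3 <;>
    simp_all [Fin.lt_def, Fin.castSucc, Fin.castAdd, Fin.castLE]

lemma det_E_step (a : ℕ → ℝ) (k n : ℕ) :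
    (Ematrix a k (n+2)).det
      = a k * (Ematrix a 1 (n+1)).det - a 0 * (Ematrix a (k+1) (n+1)).det := by
  have hsub0 : (Ematrix a k (n+2)).submatrix Fin.succ ((0 : Fin (n+2)).succAbove)
      = Ematrix a 1 (n+1) := by
    rw [Fin.succAbove_zero]
    ext i j
    simp only [Ematrix, Matrix.submatrix_apply, Matrix.of_apply, Fin.val_succ]
    split_ifs <;>
      first
        | rfl
        | omega
        | (exact congrArg a (by omega))
        | (exact absurd rfl (by omega))
        | simp_all
  have hsub1 : (Ematrix a k (n+2)).submatrix Fin.succ ((1 : Fin (n+2)).succAbove)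
      = Ematrix a (k+1) (n+1) := by
    ext i j
    simp only [Ematrix, Matrix.submatrix_apply, Matrix.of_apply, Fin.val_succ,
      succAbove_one_val]
    split_ifs <;>
      first
        | rfl
        | omega
        | (exact congrArg a (by omega))
        | simp_all
  have hzero : ∀ j : Fin n, (Ematrix a k (n+2)) 0 (j.succ.succ) = 0 := by
    intro j
    have hv : ((j.succ.succ : Fin (n+2)) : ℕ) = (j : ℕ) + 2 := by
      simp [Fin.val_succ]
    simp only [Ematrix, Matrix.of_apply, hv, Fin.val_zero]
    rw [if_neg (by omega), if_neg (by omega), if_neg (by omega)]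
  rw [show ((n:ℕ)+2) = (n+1).succ from rfl] at *
  rw [Matrix.det_succ_row_zero, Fin.sum_univ_succ, Fin.sum_univ_succ]
  have hrest : (∑ j : Fin n, (-1 : ℝ) ^ (((j.succ.succ : Fin (n+2))) : ℕ) *
      (Ematrix a k (n+2)) 0 (j.succ.succ) *
      ((Ematrix a k (n+2)).submatrix Fin.succ ((j.succ.succ : Fin (n+2)).succAbove)).det) = 0 := by
    refine Finset.sum_eq_zero fun j _ => ?_
    rw [hzero j]
    ring
  rw [Fin.succ_zero_eq_one, hrest, hsub0, hsub1]
  have h00 : (Ematrix a k (n+2)) 0 0 = a k := by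
    simp [Ematrix]
  have h01 : (Ematrix a k (n+2)) 0 1 = a 0 := by
    simp [Ematrix, Fin.val_one]
  rw [h00, h01]
  simp [Fin.val_zero, Fin.val_one]
  ring



lemma det_E_formula (a : ℕ → ℝ) : ∀ n k : ℕ,
    (Ematrix a k (n+1)).det
      = ∑ j ∈ Finset.range (n+1), (-(a 0)) ^ j * a (k+j) * (Ematrix a 1 (n-j)).det := by
  intro n
  induction n with
  | zero =>
    intro k
    rw [Finset.sum_range_one, Matrix.det_fin_one]
    have : (Ematrix a k 1) 0 0 = a k := by simp [Ematrix]
    rw [this]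
    simp [Matrix.det_fin_zero]
  | succ n ih =>
    intro k
    rw [det_E_step a k n, ih (k+1)]
    conv_rhs => rw [Finset.sum_range_succ']
    have h1 : ∀ j ∈ Finset.range (n+1),
        (-(a 0)) ^ (j+1) * a (k+(j+1)) * (Ematrix a 1 (n+1-(j+1))).det
          = -(a 0) * ((-(a 0)) ^ j * a (k+1+j) * (Ematrix a 1 (n-j)).det) := by
      intro j _
      have e1 : n + 1 - (j + 1) = n - j := by omega
      have e2 : k + (j + 1) = k + 1 + j := by omega
      rw [e1, e2, pow_succ]
      ring
    rw [Finset.sum_congr rfl h1, ← Finset.mul_sum]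
    simp only [pow_zero, Nat.add_zero, Nat.sub_zero, one_mul]
    ring

lemma det_E_rec (a : ℕ → ℝ) (n : ℕ) :
    (Ematrix a 1 (n+1)).det
      = ∑ m ∈ Finset.range (n+1), a (m+1) * (-(a 0)) ^ m * (Ematrix a 1 (n-m)).det := by
  rw [det_E_formula a n 1]
  refine Finset.sum_congr rfl fun m _ => ?_
  have : 1 + m = m + 1 := by omega
  rw [this]
  ring



/-- The multiset of parts encoded by a tuple. -/
def Pm (n : ℕ) (t : Fin n → Fin (n + 1)) : Multiset ℕ :=
  ∑ j : Fin n, Multiset.replicate (t j : ℕ) ((j : ℕ) + 1)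

lemma count_Pm (n : ℕ) (t : Fin n → Fin (n + 1)) (x : ℕ) :
    (Pm n t).count x = ∑ j : Fin n, if (j : ℕ) + 1 = x then (t j : ℕ) else 0 := by
  rw [Pm, Multiset.count_sum']
  exact Finset.sum_congr rfl fun j _ => Multiset.count_replicate _ _ _

lemma count_Pm_succ (n : ℕ) (t : Fin n → Fin (n + 1)) (j0 : Fin n) :
    (Pm n t).count ((j0 : ℕ) + 1) = (t j0 : ℕ) := by
  rw [count_Pm, Finset.sum_eq_single j0]
  · rw [if_pos rfl]
  · intro j _ hj
    rw [if_neg]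
    intro h
    exact hj (Fin.ext (by omega))
  · intro h
    exact absurd (Finset.mem_univ j0) h

lemma mem_Pm (n : ℕ) (t : Fin n → Fin (n + 1)) (x : ℕ) (hx : x ∈ Pm n t) :
    ∃ j : Fin n, x = (j : ℕ) + 1 := by
  rw [Pm, Multiset.mem_sum] at hx
  obtain ⟨j, _, hj⟩ := hx
  exact ⟨j, (Multiset.eq_of_mem_replicate hj)⟩

lemma card_Pm (n : ℕ) (t : Fin n → Fin (n + 1)) :
    Multiset.card (Pm n t) = ∑ j : Fin n, (t j : ℕ) := by
  rw [Pm]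
  induction (Finset.univ : Finset (Fin n)) using Finset.cons_induction with
  | empty => simp
  | cons x s hx ih => simp [Finset.sum_cons, ih]

lemma sum_Pm (n : ℕ) (t : Fin n → Fin (n + 1)) :
    (Pm n t).sum = ∑ j : Fin n, ((j : ℕ) + 1) * (t j : ℕ) := by
  rw [Pm]
  have h1 : (∑ j : Fin n, Multiset.replicate (t j : ℕ) ((j : ℕ) + 1)).sum
      = ∑ j : Fin n, (Multiset.replicate (t j : ℕ) ((j : ℕ) + 1)).sum :=
    map_sum Multiset.sumAddMonoidHom _ _
  rw [h1]
  refine Finset.sum_congr rfl fun j _ => ?_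
  rw [Multiset.sum_replicate, smul_eq_mul, mul_comm]

lemma tuple_sum_eq_Tsum (a : ℕ → ℝ) (n : ℕ) :
    (∑ t ∈ Finset.univ.filter
        (fun t : Fin n → Fin (n + 1) => ∑ j : Fin n, ((j : ℕ) + 1) * ((t j : ℕ)) = n),
      (((∑ j : Fin n, (t j : ℕ)).factorial : ℝ) / ∏ j : Fin n, ((t j : ℕ).factorial : ℝ)) *
        (-(a 0)) ^ (n - ∑ j : Fin n, (t j : ℕ)) *
        ∏ j : Fin n, a ((j : ℕ) + 1) ^ (t j : ℕ)) = Tsum a n := by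
  rw [Tsum]
  have himg : ∀ p : Nat.Partition n, ∀ x ∈ p.parts, ∃ j : Fin n, x = (j : ℕ) + 1 := by
    intro p x hx
    have h1 := p.parts_pos hx
    have h2 : x ≤ n := by
      have := Multiset.le_sum_of_mem hx
      rwa [p.parts_sum] at this
    exact ⟨⟨x - 1, by omega⟩, by simp; omega⟩
  refine Finset.sum_bij'
    (fun t ht => (⟨Pm n t,
      fun {x} hx => by obtain ⟨j, rfl⟩ := mem_Pm n t x hx; omega, by
        rw [sum_Pm]
        exact (Finset.mem_filter.1 ht).2⟩ : Nat.Partition n))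
    (fun p _ => fun j0 => (⟨p.parts.count ((j0 : ℕ) + 1), by
      have h1 : p.parts.count ((j0 : ℕ) + 1) ≤ Multiset.card p.parts :=
        Multiset.count_le_card _ _
      have h2 : Multiset.card p.parts ≤ p.parts.sum :=
        card_le_sum_of_pos _ fun x hx => p.parts_pos hx
      rw [p.parts_sum] at h2
      omega⟩ : Fin (n + 1)))
    (fun t ht => Finset.mem_univ _)
    ?_ ?_ ?_ ?_
  · -- backward lands in filter
    intro p _
    rw [Finset.mem_filter]
    refine ⟨Finset.mem_univ _, ?_⟩
    have hinj : Function.Injective (fun j : Fin n => (j : ℕ) + 1) := by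
      intro x y h
      dsimp only at h
      exact Fin.ext (by omega)
    have hsub : p.parts.toFinset ⊆ Finset.image (fun j : Fin n => (j : ℕ) + 1)
        Finset.univ := by
      intro x hx
      rw [Multiset.mem_toFinset] at hx
      obtain ⟨j, rfl⟩ := himg p x hx
      exact Finset.mem_image.2 ⟨j, Finset.mem_univ _, rfl⟩
    calc ∑ j0 : Fin n, ((j0 : ℕ) + 1) * p.parts.count ((j0 : ℕ) + 1)
        = ∑ x ∈ Finset.image (fun j : Fin n => (j : ℕ) + 1) Finset.univ,
            x * p.parts.count x := by
          rw [Finset.sum_image (fun x _ y _ h => hinj h)]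
      _ = ∑ x ∈ p.parts.toFinset, x * p.parts.count x := by
          refine (Finset.sum_subset hsub fun x _ hx => ?_).symm
          rw [Multiset.mem_toFinset] at hx
          rw [Multiset.count_eq_zero.2 hx, mul_zero]
      _ = p.parts.sum := by
          conv_rhs => rw [← Multiset.toFinset_sum_count_nsmul_eq p.parts]
          have h1 : (∑ x ∈ p.parts.toFinset, p.parts.count x • ({x} : Multiset ℕ)).sum
              = ∑ x ∈ p.parts.toFinset, (p.parts.count x • ({x} : Multiset ℕ)).sum :=
            map_sum Multiset.sumAddMonoidHom _ _
          rw [h1]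
          refine Finset.sum_congr rfl fun x _ => ?_
          rw [Multiset.nsmul_singleton, Multiset.sum_replicate, smul_eq_mul, mul_comm]
      _ = n := p.parts_sum
  · -- left inverse
    intro t ht
    funext j0
    refine Fin.ext ?_
    show (Pm n t).count ((j0 : ℕ) + 1) = (t j0 : ℕ)
    exact count_Pm_succ n t j0
  · -- right inverse
    intro p _
    refine Nat.Partition.ext ?_
    show Pm n _ = p.parts
    refine Multiset.ext.2 fun x => ?_
    rw [count_Pm]
    by_cases hx0 : x = 0
    · subst hx0
      rw [Finset.sum_eq_zero fun j _ => if_neg (by omega)]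
      refine (Multiset.count_eq_zero.2 fun hx => ?_).symm
      exact absurd (p.parts_pos hx) (by omega)
    by_cases hxn : x ≤ n
    · have hlt : x - 1 < n := by omega
      rw [Finset.sum_eq_single (⟨x - 1, hlt⟩ : Fin n)]
      · rw [if_pos (by simp; omega)]
        show p.parts.count ((⟨x - 1, hlt⟩ : Fin n) + 1 : ℕ) = p.parts.count x
        congr 1
        simp
        omega
      · intro j _ hj
        refine if_neg fun h => hj (Fin.ext ?_)
        simp
        omega
      · intro h
        exact absurd (Finset.mem_univ _) h
    · rw [Finset.sum_eq_zero fun j _ => if_neg (by omega)]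
      refine (Multiset.count_eq_zero.2 fun hx => ?_).symm
      have := Multiset.le_sum_of_mem hx
      rw [p.parts_sum] at this
      omega
  · -- weights agree
    intro t ht
    have hcard := card_Pm n t
    have hinj : Function.Injective (fun j : Fin n => (j : ℕ) + 1) := by
      intro x y h
      dsimp only at h
      exact Fin.ext (by omega)
    have hsub : (Pm n t).toFinset ⊆ Finset.image (fun j : Fin n => (j : ℕ) + 1)
        Finset.univ := by
      intro x hx
      rw [Multiset.mem_toFinset] at hx
      obtain ⟨j, rfl⟩ := mem_Pm n t x hx
      exact Finset.mem_image.2 ⟨j, Finset.mem_univ _, rfl⟩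
    have hden : (∏ x ∈ (Pm n t).toFinset, (((Pm n t).count x).factorial : ℝ))
        = ∏ j : Fin n, ((t j : ℕ).factorial : ℝ) := by
      rw [Finset.prod_subset hsub (fun x _ hx => by
        rw [Multiset.mem_toFinset] at hx
        rw [Multiset.count_eq_zero.2 hx]
        simp)]
      rw [Finset.prod_image (fun x _ y _ h => hinj h)]
      exact Finset.prod_congr rfl fun j _ => by rw [count_Pm_succ]
    have hprod : ((Pm n t).map a).prod = ∏ j : Fin n, a ((j : ℕ) + 1) ^ (t j : ℕ) := by
      rw [Pm]
      have h1 : (∑ j : Fin n, Multiset.replicate (t j : ℕ) ((j : ℕ) + 1)).map a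
          = ∑ j : Fin n, (Multiset.replicate (t j : ℕ) ((j : ℕ) + 1)).map a :=
        map_sum (Multiset.mapAddMonoidHom a) _ _
      rw [h1, Multiset.prod_sum]
      refine Finset.prod_congr rfl fun j _ => ?_
      rw [Multiset.map_replicate, Multiset.prod_replicate]
    show _ = mR (Pm n t) * (-(a 0)) ^ (n - Multiset.card (Pm n t)) * ((Pm n t).map a).prod
    rw [mR, hcard, hden, hprod]


lemma Tsum_eq_det (a : ℕ → ℝ) : ∀ n : ℕ, Tsum a n = (Ematrix a 1 n).det := by
  intro n
  induction n using Nat.strong_induction_on with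
  | _ n ih =>
    obtain _ | m := n
    · rw [Tsum_zero]
      exact Matrix.det_fin_zero.symm
    · rw [Tsum_rec, det_E_rec]
      refine Finset.sum_congr rfl fun k hk => ?_
      rw [ih (m - k) (by omega)]

/- The sum ranges over all tuples `(t_1, …, t_n)` of nonnegative integers with
`t_1 + 2 t_2 + ⋯ + n t_n = n`; such tuples necessarily have each `t_j ≤ n`,
so they are faithfully encoded as functions `Fin n → Fin (n+1)`. -/
theorem trudi_formula (n : ℕ) (hn : 1 ≤ n) (a : ℕ → ℝ) :
    Matrix.det (Matrix.of fun i j : Fin n =>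
        if (j : ℕ) = (i : ℕ) + 1 then a 0
        else if (j : ℕ) ≤ (i : ℕ) then a ((i : ℕ) - (j : ℕ) + 1)
        else 0) =
      ∑ t ∈ Finset.univ.filter
          (fun t : Fin n → Fin (n + 1) => ∑ j : Fin n, ((j : ℕ) + 1) * ((t j : ℕ)) = n),
        (((∑ j : Fin n, (t j : ℕ)).factorial : ℝ) / ∏ j : Fin n, ((t j : ℕ).factorial : ℝ)) *
          (-(a 0)) ^ (n - ∑ j : Fin n, (t j : ℕ)) *
          ∏ j : Fin n, a ((j : ℕ) + 1) ^ (t j : ℕ) := by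
  have hmat : (Matrix.of fun i j : Fin n =>
      if (j : ℕ) = (i : ℕ) + 1 then a 0
      else if (j : ℕ) ≤ (i : ℕ) then a ((i : ℕ) - (j : ℕ) + 1)
      else 0) = Ematrix a 1 n := by
    ext i j
    simp only [Ematrix, Matrix.of_apply]
    split_ifs <;> first | rfl | omega | (exact congrArg a (by omega)) | simp_all
  rw [hmat, tuple_sum_eq_Tsum a n]
  exact (Tsum_eq_det a n).symm
end
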